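/- arXiv:1911.00799 — 2 statements merged into one kernel-verified Lean document; each statement's English description precedes it below -/
import Mathlib

section
/- Error bound via metric subregularity (inequality (4.12) in the proof of Theorem 4.6): suppose the operator F is metrically subregular at ẑ^{k+1} = (x^{k+1}, ŷ^{k+1}) for 0 with constant η in the weighted norm ‖·‖_S, i.e. dist_S(z, Z^*) ≤ η dist_S(0, Fz) on a neighborhood containing the relevant points. Then ½ dist²_S(z^k, Z^*) = ½‖x^k − x̃_*^k‖²_{τ^{-1}} + ½‖y^k − y_*^k‖²_{D(σ)^{-1}} ≤ (2 + 2η²‖N − H‖²) · E_k[½‖x^{k+1} − x^k‖²_{τ^{-1}} + ½‖y^{k+1} − y^k‖²_{D(σ)^{-1}P^{-1}}], where (x̃_*^k, y_*^k) is the projection of z^k = (x^k, y^k) onto Z^* in the norm ‖·‖_S. -/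
noncomputable section

open Finset

local notation "⟪" x ", " y "⟫" => @inner ℝ _ _ x y

/-- `v = prox_{t·h}(u)`: `v` minimizes `w ↦ h w + ‖w − u‖²/(2t)`. -/
def IsProx {E : Type*} [NormedAddCommGroup E] [InnerProductSpace ℝ E]
    (t : ℝ) (h : E → ℝ) (u v : E) : Prop :=
  ∀ w, h v + ‖v - u‖ ^ 2 / (2 * t) ≤ h w + ‖w - u‖ ^ 2 / (2 * t)

/-- Convex subdifferential of `h` at `x`. -/
def subdiffAt {E : Type*} [NormedAddCommGroup E] [InnerProductSpace ℝ E]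
    (h : E → ℝ) (x : E) : Set E :=
  {v | ∀ z, h x + ⟪v, z - x⟫ ≤ h z}

/-- `A^⊤ y = ∑ i (A i)^* (y i)`. -/
def AT {X : Type*} [NormedAddCommGroup X] [InnerProductSpace ℝ X] [CompleteSpace X]
    {n : ℕ} {Y : Fin n → Type*} [∀ i, NormedAddCommGroup (Y i)]
    [∀ i, InnerProductSpace ℝ (Y i)] [∀ i, CompleteSpace (Y i)]
    (A : ∀ i, X →L[ℝ] Y i) (y : ∀ i, Y i) : X :=
  ∑ i, (A i).adjoint (y i)

/-!
Each prox step of SPDHG yields subgradients `u ∈ ∂g(x̂ᵢ)` and `v ∈ ∂f*(ŷ)` whose optimality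
residual `(u + Aᵀŷ, v − Ax̂ᵢ)` is exactly the `i`-th block of `(N − H)` applied to the step
`ẑᵢ − zᵏ`, where `ẑᵢ = (x̂ᵢ, ŷ)`. Metric subregularity at `ẑᵢ` provides a point of `Z*` within
`η ‖(N − H)ᵢ(ẑᵢ − zᵏ)‖_S` of `ẑᵢ`; minimality of the projection and
`‖a + b‖² ≤ 2‖a‖² + 2‖b‖²` then give, for every `i`,
`dist²_S(zᵏ, Z*) ≤ 2‖ẑᵢ − zᵏ‖²_S + 2η²‖(N − H)ᵢ(ẑᵢ − zᵏ)‖²_S`.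
Average over `i` with weights `pᵢ`, bound the second term by `‖N − H‖²`, and use
`E_k ‖y^{k+1} − yᵏ‖²_{D(σ)⁻¹P⁻¹} = ‖ŷ − yᵏ‖²_{D(σ)⁻¹}`.
-/

open Function

open Filter Topology in
lemma le_of_forall_mem_Ioc_le_add_mul {a b c : ℝ}
    (h : ∀ s ∈ Set.Ioc (0 : ℝ) 1, a ≤ b + s * c) : a ≤ b := by
  have hlim : Tendsto (fun s : ℝ => b + s * c) (𝓝[>] 0) (𝓝 b) := by
    have : Tendsto (fun s : ℝ => b + s * c) (𝓝 0) (𝓝 (b + 0 * c)) :=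
      (continuous_const.add (continuous_id.mul continuous_const)).tendsto 0
    simpa using this.mono_left nhdsWithin_le_nhds
  exact ge_of_tendsto hlim (Filter.mem_of_superset (Ioc_mem_nhdsGT one_pos) h)

theorem IsProx.smul_sub_mem_subdiffAt {E : Type*} [NormedAddCommGroup E]
    [InnerProductSpace ℝ E] {t : ℝ} {h : E → ℝ} {u v : E} (hpx : IsProx t h u v)
    (ht : 0 < t) (hh : ConvexOn ℝ Set.univ h) : t⁻¹ • (u - v) ∈ subdiffAt h v := by
  intro z
  refine le_of_forall_mem_Ioc_le_add_mul (c := ‖z - v‖ ^ 2 / (2 * t)) fun s ⟨hs0, hs1⟩ => ?_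
  have hmin := hpx (v + s • (z - v))
  have hconv : h (v + s • (z - v)) ≤ (1 - s) * h v + s * h z := by
    have hcomb : (1 - s) • v + s • z = v + s • (z - v) := by module
    simpa only [hcomb, smul_eq_mul] using
      hh.2 (Set.mem_univ v) (Set.mem_univ z) (sub_nonneg.2 hs1) hs0.le (by ring)
  have hnorm : ‖v + s • (z - v) - u‖ ^ 2
      = ‖v - u‖ ^ 2 + 2 * s * ⟪v - u, z - v⟫ + s ^ 2 * ‖z - v‖ ^ 2 := by
    rw [add_sub_right_comm, norm_add_sq_real, real_inner_smul_right, norm_smul,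
      Real.norm_of_nonneg hs0.le]
    ring
  have hinner : ⟪t⁻¹ • (u - v), z - v⟫ = -(t⁻¹ * ⟪v - u, z - v⟫) := by
    rw [real_inner_smul_left, ← neg_sub v u, inner_neg_left, mul_neg]
  rw [hnorm] at hmin
  rw [hinner]
  have hscaled : s * (h v - t⁻¹ * ⟪v - u, z - v⟫)
      ≤ s * (h z + s * (‖z - v‖ ^ 2 / (2 * t))) := by
    have hexpand : (‖v - u‖ ^ 2 + 2 * s * ⟪v - u, z - v⟫ + s ^ 2 * ‖z - v‖ ^ 2) / (2 * t)
        = ‖v - u‖ ^ 2 / (2 * t) + s * (t⁻¹ * ⟪v - u, z - v⟫)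
          + s * (s * (‖z - v‖ ^ 2 / (2 * t))) := by
      field_simp
    nlinarith
  linarith [le_of_mul_le_mul_left hscaled hs0]

lemma le_sum_mul_of_forall_le {ι : Type*} [Fintype ι] {p f : ι → ℝ} {a : ℝ}
    (hp : ∀ i, 0 ≤ p i) (hpsum : ∑ i, p i = 1) (h : ∀ i, a ≤ f i) :
    a ≤ ∑ i, p i * f i :=
  calc a = ∑ i, p i * a := by rw [← sum_mul, hpsum, one_mul]
    _ ≤ ∑ i, p i * f i := sum_le_sum fun i _ => mul_le_mul_of_nonneg_left (h i) (hp i)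

lemma norm_add_sq_le_two_mul {E : Type*} [SeminormedAddCommGroup E] (a b : E) :
    ‖a + b‖ ^ 2 ≤ 2 * ‖a‖ ^ 2 + 2 * ‖b‖ ^ 2 := by
  have := (pow_le_pow_left₀ (norm_nonneg _) (norm_add_le a b) 2).trans add_sq_le
  linarith

section WeightedNorm

variable {X ι : Type*} [SeminormedAddCommGroup X] [Fintype ι] {Y : ι → Type*}
  [∀ i, SeminormedAddCommGroup (Y i)]

/-- The paper's `‖z‖²_S`. -/
def normSqS (τ : ℝ) (σ : ι → ℝ) (z : X × ∀ i, Y i) : ℝ :=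
  τ⁻¹ * ‖z.1‖ ^ 2 + ∑ i, (σ i)⁻¹ * ‖z.2 i‖ ^ 2

variable {τ : ℝ} {σ : ι → ℝ}

lemma normSqS_sub_comm (z w : X × ∀ i, Y i) : normSqS τ σ (z - w) = normSqS τ σ (w - z) := by
  simp only [normSqS, Prod.fst_sub, Prod.snd_sub, Pi.sub_apply, norm_sub_rev]

lemma normSqS_add_le (hτ : 0 ≤ τ) (hσ : ∀ i, 0 ≤ σ i) (z w : X × ∀ i, Y i) :
    normSqS τ σ (z + w) ≤ 2 * normSqS τ σ z + 2 * normSqS τ σ w := by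
  have hY : ∀ i, (σ i)⁻¹ * ‖z.2 i + w.2 i‖ ^ 2
      ≤ 2 * ((σ i)⁻¹ * ‖z.2 i‖ ^ 2) + 2 * ((σ i)⁻¹ * ‖w.2 i‖ ^ 2) := fun i => by
    nlinarith [mul_le_mul_of_nonneg_left (norm_add_sq_le_two_mul (z.2 i) (w.2 i))
      (inv_nonneg.2 (hσ i))]
  have hX := mul_le_mul_of_nonneg_left (norm_add_sq_le_two_mul z.1 w.1) (inv_nonneg.2 hτ)
  have hsum := sum_le_sum fun i (_ : i ∈ univ) => hY i
  simp only [normSqS, Prod.fst_add, Prod.snd_add, Pi.add_apply, mul_add, sum_add_distrib,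
    ← mul_sum] at hsum hX ⊢
  linarith

lemma normSqS_sub_le_of_isProj (hτ : 0 ≤ τ) (hσ : ∀ i, 0 ≤ σ i)
    {Zs : Set (X × ∀ i, Y i)} {a zstar b : X × ∀ i, Y i} {r : ℝ}
    (hproj : ∀ z ∈ Zs, normSqS τ σ (a - zstar) ≤ normSqS τ σ (a - z))
    (hnear : ∃ z ∈ Zs, normSqS τ σ (b - z) ≤ r) :
    normSqS τ σ (a - zstar) ≤ 2 * normSqS τ σ (b - a) + 2 * r := by
  obtain ⟨z, hz, hbz⟩ := hnear
  calc normSqS τ σ (a - zstar) ≤ normSqS τ σ ((a - b) + (b - z)) := by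
        simpa only [sub_add_sub_cancel] using hproj z hz
    _ ≤ 2 * normSqS τ σ (a - b) + 2 * normSqS τ σ (b - z) := normSqS_add_le hτ hσ _ _
    _ ≤ 2 * normSqS τ σ (b - a) + 2 * r := by rw [normSqS_sub_comm a b]; linarith

end WeightedNorm

lemma sum_mul_sum_update_sub {ι : Type*} [Fintype ι] [DecidableEq ι] {Y : ι → Type*}
    [∀ i, SeminormedAddCommGroup (Y i)] {p : ι → ℝ} (hp : ∀ i, p i ≠ 0) (w : ι → ℝ)
    (y y' : ∀ i, Y i) :
    ∑ i, p i * ∑ j, (w j * p j)⁻¹ * ‖update y i (y' i) j - y j‖ ^ 2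
      = ∑ i, (w i)⁻¹ * ‖y' i - y i‖ ^ 2 := by
  refine sum_congr rfl fun i _ => ?_
  rw [sum_eq_single i (fun j _ hj => by simp [update_of_ne hj]) (by simp), update_self,
    mul_inv, ← mul_assoc, ← mul_assoc, mul_comm (p i), mul_assoc _ (p i),
    mul_inv_cancel₀ (hp i), mul_one]

lemma sum_mul_half_stepSq_eq {X ι : Type*} [SeminormedAddCommGroup X] [Fintype ι]
    [DecidableEq ι] {Y : ι → Type*} [∀ i, SeminormedAddCommGroup (Y i)] {p : ι → ℝ}
    (hp : ∀ i, p i ≠ 0) (hpsum : ∑ i, p i = 1) (τ : ℝ) (σ : ι → ℝ) (x : ι → X) (xk : X)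
    (yk yh : ∀ i, Y i) :
    ∑ i, p i * ((1 / 2) * (τ⁻¹ * ‖x i - xk‖ ^ 2)
        + (1 / 2) * ∑ j, (σ j * p j)⁻¹ * ‖update yk i (yh i) j - yk j‖ ^ 2)
      = (1 / 2) * ∑ i, p i * normSqS τ σ ((x i, yh) - (xk, yk)) := by
  have hdual := sum_mul_sum_update_sub hp σ yk yh
  simp only [normSqS, Prod.fst_sub, Prod.snd_sub, Pi.sub_apply, mul_add, sum_add_distrib,
    ← sum_mul, hpsum, one_mul] at hdual ⊢
  rw [← hdual, mul_sum, mul_sum]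
  simp only [mul_left_comm (p _)]

section SPDHG

variable {X : Type*} [NormedAddCommGroup X] [InnerProductSpace ℝ X] [CompleteSpace X]
  {n : ℕ} {Y : Fin n → Type*} [∀ i, NormedAddCommGroup (Y i)]
  [∀ i, InnerProductSpace ℝ (Y i)] [∀ i, CompleteSpace (Y i)]
  (A : ∀ i, X →L[ℝ] Y i)

lemma AT_sub (y y' : ∀ i, Y i) : AT A (y - y') = AT A y - AT A y' := by
  simp only [AT, Pi.sub_apply, map_sub, sum_sub_distrib]

lemma AT_update (y : ∀ i, Y i) (i : Fin n) (w : Y i) :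
    AT A (update y i w) = AT A y + (A i).adjoint (w - y i) := by
  have hupd : update y i w = y + Pi.single i (w - y i) := by
    ext j
    rcases eq_or_ne j i with rfl | hj <;> simp [*]
  simp only [hupd, AT, Pi.add_apply, map_add, sum_add_distrib, add_right_inj]
  rw [sum_eq_single i (fun j _ hj => by rw [Pi.single_eq_of_ne hj, map_zero]) (by simp),
    Pi.single_eq_same]

/-- The paper's `(N - H)(𝐱, 𝐲)(i)`, as a function of `(𝐱(i), 𝐲(i))`. -/
def nSubHBlock (p σ : Fin n → ℝ) (τ : ℝ) (i : Fin n) (z : X × ∀ j, Y j) : X × ∀ j, Y j :=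
  (AT A z.2 - τ⁻¹ • z.1 - (1 + (p i)⁻¹) • (A i).adjoint (z.2 i),
    fun j => -(A j z.1) - (σ j)⁻¹ • z.2 j)

lemma spdhg_residual_eq_nSubHBlock {p σ : Fin n → ℝ} {τ : ℝ} (hτ : τ ≠ 0)
    (hσ : ∀ j, σ j ≠ 0) (i : Fin n) (xk x : X) (yk yh : ∀ j, Y j) :
    (τ⁻¹ • (xk - τ • AT A (update yk i (yk i + (1 + (p i)⁻¹) • (yh i - yk i))) - x)
        + AT A yh,
      fun j => (σ j)⁻¹ • (yk j + σ j • A j xk - yh j) - A j x)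
      = nSubHBlock A p σ τ i ((x, yh) - (xk, yk)) := by
  ext j
  · simp only [nSubHBlock, AT_update, AT_sub, Prod.fst_sub, Prod.snd_sub, Pi.sub_apply,
      map_sub, map_smul, smul_sub, smul_smul, inv_mul_cancel₀ hτ, one_smul, add_sub_cancel_left]
    abel
  · simp only [nSubHBlock, Prod.fst_sub, Prod.snd_sub, Pi.sub_apply, map_sub, smul_sub,
      smul_add, smul_smul, inv_mul_cancel₀ (hσ j), one_smul]
    abel

end SPDHG

theorem spdhg_error_bound_metric_subregularity_general
    {X : Type*} [NormedAddCommGroup X] [InnerProductSpace ℝ X] [FiniteDimensional ℝ X]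
    {n : ℕ} {Y : Fin n → Type*} [∀ i, NormedAddCommGroup (Y i)]
    [∀ i, InnerProductSpace ℝ (Y i)] [∀ i, FiniteDimensional ℝ (Y i)]
    (g : X → ℝ) (fstar : ∀ i, Y i → ℝ)
    (hg : ConvexOn ℝ Set.univ g) (hfs : ∀ i, ConvexOn ℝ Set.univ (fstar i))
    (A : ∀ i, X →L[ℝ] Y i)
    (p σ : Fin n → ℝ) (τ : ℝ)
    (hp : ∀ i, 0 < p i) (hpsum : ∑ i, p i = 1)
    (hτ : 0 < τ) (hσ : ∀ i, 0 < σ i)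
    -- the solution set Z^* = F⁻¹(0)
    (Zs : Set (X × (∀ i, Y i)))
    -- current iterate (x^k, y^k), the full dual update ŷ^{k+1} = yh and the primal
    -- candidates x^{k+1} = xhat i (when i_k = i)
    (xk : X) (yk : ∀ j, Y j) (yh : ∀ j, Y j)
    (hyh : ∀ j, IsProx (σ j) (fstar j) (yk j + σ j • A j xk) (yh j))
    (xhat : Fin n → X)
    (hxhat : ∀ i, IsProx τ g
      (xk - τ • AT A (Function.update yk i
        (yk i + (1 + (p i)⁻¹) • (yh i - yk i)))) (xhat i))
    -- metric subregularity of F at each ẑ^{k+1} = (xhat i, yh) for 0, constant η, norm S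
    (η : ℝ)
    (hMS : ∀ i, ∀ u ∈ subdiffAt g (xhat i), ∀ v : ∀ j, Y j,
      (∀ j, v j ∈ subdiffAt (fstar j) (yh j)) →
      ∃ z ∈ Zs,
        τ⁻¹ * ‖xhat i - z.1‖ ^ 2 + ∑ j, (σ j)⁻¹ * ‖yh j - z.2 j‖ ^ 2
          ≤ η ^ 2 * (τ⁻¹ * ‖u + AT A yh‖ ^ 2
              + ∑ j, (σ j)⁻¹ * ‖v j - A j (xhat i)‖ ^ 2))
    -- cNH bounds the operator norm ‖N − H‖ in the S̄P̄-weighted norm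
    (cNH : ℝ)
    (hcNH : ∀ (xv : Fin n → X) (yv : Fin n → ∀ j, Y j),
      ∑ i, p i * (τ⁻¹ * ‖AT A (yv i) - τ⁻¹ • xv i
            - (1 + (p i)⁻¹) • (A i).adjoint (yv i i)‖ ^ 2
          + ∑ j, (σ j)⁻¹ * ‖(-(A j (xv i))) - (σ j)⁻¹ • yv i j‖ ^ 2)
        ≤ cNH ^ 2 * ∑ i, p i * (τ⁻¹ * ‖xv i‖ ^ 2 + ∑ j, (σ j)⁻¹ * ‖yv i j‖ ^ 2))
    -- (x̃_*^k, y_*^k): the projection of z^k onto Z^* in the S-weighted norm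
    (xstar : X) (ystar : ∀ j, Y j)
    (hprojmin : ∀ z ∈ Zs,
      τ⁻¹ * ‖xk - xstar‖ ^ 2 + ∑ j, (σ j)⁻¹ * ‖yk j - ystar j‖ ^ 2
        ≤ τ⁻¹ * ‖xk - z.1‖ ^ 2 + ∑ j, (σ j)⁻¹ * ‖yk j - z.2 j‖ ^ 2) :
    (1 / 2) * (τ⁻¹ * ‖xk - xstar‖ ^ 2) + (1 / 2) * (∑ j, (σ j)⁻¹ * ‖yk j - ystar j‖ ^ 2)
      ≤ (2 + 2 * η ^ 2 * cNH ^ 2) *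
          ∑ i, p i * ((1 / 2) * (τ⁻¹ * ‖xhat i - xk‖ ^ 2)
            + (1 / 2) * ∑ j, (σ j * p j)⁻¹ *
                ‖Function.update yk i (yh i) j - yk j‖ ^ 2) := by
  set zk : X × ∀ j, Y j := (xk, yk)
  set step : Fin n → X × ∀ j, Y j := fun i => (xhat i, yh) - zk
  have hnear : ∀ i, ∃ z ∈ Zs, normSqS τ σ ((xhat i, yh) - z)
      ≤ η ^ 2 * normSqS τ σ (nSubHBlock A p σ τ i (step i)) := fun i => by
    rw [← spdhg_residual_eq_nSubHBlock A hτ.ne' (fun j => (hσ j).ne')]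
    exact hMS i _ ((hxhat i).smul_sub_mem_subdiffAt hτ hg) _
      fun j => (hyh j).smul_sub_mem_subdiffAt (hσ j) (hfs j)
  have hpoint : ∀ i, normSqS τ σ (zk - (xstar, ystar))
      ≤ 2 * normSqS τ σ (step i)
        + 2 * (η ^ 2 * normSqS τ σ (nSubHBlock A p σ τ i (step i))) :=
    fun i => normSqS_sub_le_of_isProj hτ.le (fun j => (hσ j).le) hprojmin (hnear i)
  have havg := le_sum_mul_of_forall_le (fun i => (hp i).le) hpsum hpoint
  have hNH : ∑ i, p i * normSqS τ σ (nSubHBlock A p σ τ i (step i))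
      ≤ cNH ^ 2 * ∑ i, p i * normSqS τ σ (step i) :=
    hcNH (fun i => xhat i - xk) (fun _ => yh - yk)
  rw [sum_mul_half_stepSq_eq (fun i => (hp i).ne') hpsum]
  simp only [mul_add, sum_add_distrib, mul_left_comm (p _), ← mul_sum] at havg
  have hdist : normSqS τ σ (zk - (xstar, ystar))
      = τ⁻¹ * ‖xk - xstar‖ ^ 2 + ∑ j, (σ j)⁻¹ * ‖yk j - ystar j‖ ^ 2 := rfl
  linarith [mul_le_mul_of_nonneg_left hNH (sq_nonneg η)]

/-- Error bound via metric subregularity (inequality (4.12) in the proof of Theorem 4.6).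
If `F` is metrically subregular with constant `η` in the `S`-weighted norm at every
candidate point `ẑ^{k+1} = (x̂(i), ŷ)`, and `cNH` bounds the `S̄P̄`-operator norm of
`N − H`, then `½ dist²_S(z^k, Z^*) ≤ (2 + 2η²cNH²) E_k[½‖x^{k+1} − x^k‖²_{τ⁻¹}
  + ½‖y^{k+1} − y^k‖²_{D(σ)⁻¹P⁻¹}]`, with `(x̃_*^k, y_*^k)` the `S`-projection of
`z^k = (x^k, y^k)` onto `Z^*`. -/
theorem spdhg_error_bound_metric_subregularity
    {X : Type*} [NormedAddCommGroup X] [InnerProductSpace ℝ X] [FiniteDimensional ℝ X]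
    {n : ℕ} {Y : Fin n → Type*} [∀ i, NormedAddCommGroup (Y i)]
    [∀ i, InnerProductSpace ℝ (Y i)] [∀ i, FiniteDimensional ℝ (Y i)]
    (g : X → ℝ) (fstar : ∀ i, Y i → ℝ)
    (hg : ConvexOn ℝ Set.univ g) (hfs : ∀ i, ConvexOn ℝ Set.univ (fstar i))
    (A : ∀ i, X →L[ℝ] Y i)
    (p σ : Fin n → ℝ) (τ γ : ℝ)
    (hp : ∀ i, 0 < p i) (hpsum : ∑ i, p i = 1)
    (hτ : 0 < τ) (hσ : ∀ i, 0 < σ i) (hγ0 : 0 < γ) (hγ1 : γ < 1)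
    (hstep : ∀ i, (p i)⁻¹ * τ * σ i * ‖A i‖ ^ 2 ≤ γ ^ 2)
    -- the solution set Z^* = F⁻¹(0)
    (Zs : Set (X × (∀ i, Y i)))
    (hZs : Zs = {z | -(AT A z.2) ∈ subdiffAt g z.1
      ∧ ∀ i, A i z.1 ∈ subdiffAt (fstar i) (z.2 i)})
    (hZsne : Zs.Nonempty)
    -- current iterate (x^k, y^k), the full dual update ŷ^{k+1} = yh and the primal
    -- candidates x^{k+1} = xhat i (when i_k = i)
    (xk : X) (yk : ∀ j, Y j) (yh : ∀ j, Y j)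
    (hyh : ∀ j, IsProx (σ j) (fstar j) (yk j + σ j • A j xk) (yh j))
    (xhat : Fin n → X)
    (hxhat : ∀ i, IsProx τ g
      (xk - τ • AT A (Function.update yk i
        (yk i + (1 + (p i)⁻¹) • (yh i - yk i)))) (xhat i))
    -- metric subregularity of F at each ẑ^{k+1} = (xhat i, yh) for 0, constant η, norm S
    (η : ℝ) (hη : 0 < η)
    (hMS : ∀ i, ∀ u ∈ subdiffAt g (xhat i), ∀ v : ∀ j, Y j,
      (∀ j, v j ∈ subdiffAt (fstar j) (yh j)) →
      ∃ z ∈ Zs,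
        τ⁻¹ * ‖xhat i - z.1‖ ^ 2 + ∑ j, (σ j)⁻¹ * ‖yh j - z.2 j‖ ^ 2
          ≤ η ^ 2 * (τ⁻¹ * ‖u + AT A yh‖ ^ 2
              + ∑ j, (σ j)⁻¹ * ‖v j - A j (xhat i)‖ ^ 2))
    -- cNH bounds the operator norm ‖N − H‖ in the S̄P̄-weighted norm
    (cNH : ℝ) (hcNH0 : 0 ≤ cNH)
    (hcNH : ∀ (xv : Fin n → X) (yv : Fin n → ∀ j, Y j),
      ∑ i, p i * (τ⁻¹ * ‖AT A (yv i) - τ⁻¹ • xv i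
            - (1 + (p i)⁻¹) • (A i).adjoint (yv i i)‖ ^ 2
          + ∑ j, (σ j)⁻¹ * ‖(-(A j (xv i))) - (σ j)⁻¹ • yv i j‖ ^ 2)
        ≤ cNH ^ 2 * ∑ i, p i * (τ⁻¹ * ‖xv i‖ ^ 2 + ∑ j, (σ j)⁻¹ * ‖yv i j‖ ^ 2))
    -- (x̃_*^k, y_*^k): the projection of z^k onto Z^* in the S-weighted norm
    (xstar : X) (ystar : ∀ j, Y j) (hproj : (xstar, ystar) ∈ Zs)
    (hprojmin : ∀ z ∈ Zs,
      τ⁻¹ * ‖xk - xstar‖ ^ 2 + ∑ j, (σ j)⁻¹ * ‖yk j - ystar j‖ ^ 2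
        ≤ τ⁻¹ * ‖xk - z.1‖ ^ 2 + ∑ j, (σ j)⁻¹ * ‖yk j - z.2 j‖ ^ 2) :
    (1 / 2) * (τ⁻¹ * ‖xk - xstar‖ ^ 2) + (1 / 2) * (∑ j, (σ j)⁻¹ * ‖yk j - ystar j‖ ^ 2)
      ≤ (2 + 2 * η ^ 2 * cNH ^ 2) *
          ∑ i, p i * ((1 / 2) * (τ⁻¹ * ‖xhat i - xk‖ ^ 2)
            + (1 / 2) * ∑ j, (σ j * p j)⁻¹ *
                ‖Function.update yk i (yh i) j - yk j‖ ^ 2) :=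
  spdhg_error_bound_metric_subregularity_general g fstar hg hfs A p σ τ hp hpsum hτ hσ Zs xk yk yh
    hyh xhat hxhat η hMS cNH hcNH xstar ystar hprojmin
end
end

section
/- Variance bound and zero conditional mean for the dual correction sequence (Lemma 4.8, (4.22)): with v^{k+1} = y^k − ŷ^{k+1} − P^{-1}(y^k − y^{k+1}) defined from the SPDHG iterates, one has E_k[v^{k+1}] = 0 for every k ≥ 1, and for every K ≥ 1 and any fixed primal-dual solution z^* = (x^*, y^*), E[Σ_{k=1}^K ½‖v^{k+1}‖²_{D(σ)^{-1}P}] ≤ Δ^0 / C_1, where C_1 = 1 − γ and Δ^0 = V_1(x^0 − x^*, y^1 − y^*). -/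
/-!
Take the Lyapunov function
`V(x^k, y^{k+1}) = ½‖x^k − x^*‖²_{τ⁻¹} − ⟨A(x^k − x^*), P⁻¹(y^{k+1} − y^k)⟩
  + (γ/2)‖y^{k+1} − y^k‖²_{D(σ)⁻¹P⁻¹} + ½‖y^{k+1} − y^*‖²_{D(σ)⁻¹P⁻¹}`.
Only one dual block changes per step, so Young's inequality together with the step-size
condition shows `V ≥ 0`. The prox steps give three-point inequalities against the saddle point.
Averaging over the block `i_k` then shows that `E_k` of `V` at step `k` plus
`(1 − γ)·½‖v^{k+1}‖²_{D(σ)⁻¹P}` is at most `V` at step `k − 1`, and telescoping bounds the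
expected sum by `V` at step `0`, which is `Δ⁰`. The zero mean is the identity
`E_k[P⁻¹(y^k − y^{k+1})] = y^k − ŷ^{k+1}`.
-/

noncomputable section

open Finset

local notation "⟪" x ", " y "⟫" => @inner ℝ _ _ x y

/-- Expectation over the i.i.d. random indices `i_1 = ω 0, i_2 = ω 1, …` with
`ℙ(i_k = i) = p i`, of a quantity depending only on the first `K` indices:
the `p`-weighted sum over all histories of length `K` (extended by `i0` beyond `K`). -/
def Exp {n : ℕ} (i0 : Fin n) (p : Fin n → ℝ) (K : ℕ) (f : (ℕ → Fin n) → ℝ) : ℝ :=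
  ∑ t : Fin K → Fin n, (∏ j, p (t j)) * f (fun m => if h : m < K then t ⟨m, h⟩ else i0)
open Filter Topology in
theorem le_of_forall_mem_Ioo_le_add_mul {a b c : ℝ} (h : ∀ s ∈ Set.Ioo (0 : ℝ) 1,
    a ≤ b + s * c) : a ≤ b := by
  have hcont : Continuous fun s : ℝ => b + s * c := by fun_prop
  have hlim : Tendsto (fun s : ℝ => b + s * c) (𝓝[>] 0) (𝓝 b) := by
    simpa using (hcont.tendsto 0).mono_left nhdsWithin_le_nhds
  exact ge_of_tendsto hlim (Filter.mem_of_superset (Ioo_mem_nhdsGT one_pos) h)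

section Prox

variable {E : Type*} [NormedAddCommGroup E] [InnerProductSpace ℝ E]
  {t : ℝ} {h : E → ℝ} {u v : E}

theorem IsProx.add_inner_div_le (hp : IsProx t h u v) (hc : ConvexOn ℝ Set.univ h)
    (ht : 0 < t) (w : E) : h v + ⟪u - v, w - v⟫ / t ≤ h w := by
  refine le_of_forall_mem_Ioo_le_add_mul (c := ‖w - v‖ ^ 2 / (2 * t)) fun s ⟨hs0, hs1⟩ => ?_
  have hconv : h ((1 - s) • v + s • w) ≤ (1 - s) * h v + s * h w :=
    hc.2 (Set.mem_univ v) (Set.mem_univ w) (sub_nonneg.2 hs1.le) hs0.le (sub_add_cancel 1 s)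
  have hmin := hp ((1 - s) • v + s • w)
  have hnorm : ‖(1 - s) • v + s • w - u‖ ^ 2 / (2 * t) = ‖v - u‖ ^ 2 / (2 * t)
      - s * (⟪u - v, w - v⟫ / t) + s * (s * (‖w - v‖ ^ 2 / (2 * t))) := by
    rw [show (1 - s) • v + s • w - u = (v - u) + s • (w - v) by module, norm_add_sq_real,
      real_inner_smul_right, norm_smul, Real.norm_eq_abs, abs_of_pos hs0,
      ← neg_sub u v, inner_neg_left]
    field_simp
    ring
  rw [hnorm] at hmin
  have key : s * (h v + ⟪u - v, w - v⟫ / t) ≤ s * (h w + s * (‖w - v‖ ^ 2 / (2 * t))) := by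
    linarith
  exact le_of_mul_le_mul_left key hs0

theorem IsProx.eq (hp : IsProx t h u v) {v' : E} (hp' : IsProx t h u v')
    (hc : ConvexOn ℝ Set.univ h) (ht : 0 < t) : v = v' := by
  have h1 := hp.add_inner_div_le hc ht v'
  have h2 := hp'.add_inner_div_le hc ht v
  have hsum : ⟪u - v, v' - v⟫ + ⟪u - v', v - v'⟫ = ‖v - v'‖ ^ 2 := by
    rw [show u - v' = (u - v) + (v - v') by abel, show v' - v = -(v - v') by abel,
      inner_add_left, inner_neg_right, real_inner_self_eq_norm_sq]
    ring
  have hle : ‖v - v'‖ ^ 2 / t ≤ 0 := by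
    rw [← hsum, add_div]
    linarith
  rw [div_le_iff₀ ht, zero_mul] at hle
  rw [← sub_eq_zero, ← norm_eq_zero, ← sq_eq_zero_iff]
  exact le_antisymm hle (sq_nonneg _)

theorem IsProx.three_point {a b s z : E} (hp : IsProx t h (a + t • b) v)
    (hc : ConvexOn ℝ Set.univ h) (ht : 0 < t) (hs : s ∈ subdiffAt h z) :
    (‖a - v‖ ^ 2 + ‖v - z‖ ^ 2 - ‖a - z‖ ^ 2) / (2 * t) ≤ ⟪b - s, v - z⟫ := by
  have hprox := hp.add_inner_div_le hc ht z
  have hsub := hs v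
  have hpolar : ⟪a - v, z - v⟫ = (‖a - v‖ ^ 2 + ‖v - z‖ ^ 2 - ‖a - z‖ ^ 2) / 2 := by
    rw [show a - z = (a - v) - (z - v) by abel, norm_sub_sq_real (a - v) (z - v),
      ← norm_neg (v - z), neg_sub]
    ring
  have hsplit : ⟪a + t • b - v, z - v⟫ / t = ⟪a - v, z - v⟫ / t - ⟪b, v - z⟫ := by
    rw [show a + t • b - v = (a - v) + t • b by abel, inner_add_left, real_inner_smul_left,
      ← neg_sub v z]
    simp only [inner_neg_right]
    field_simp
    ring
  rw [hsplit, hpolar, div_div] at hprox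
  rw [inner_sub_left]
  linarith

end Prox

theorem mul_mul_le_add_of_sq_le {α β c a b : ℝ} (hα : 0 < α) (h : c ^ 2 ≤ 4 * α * β) :
    c * a * b ≤ α * a ^ 2 + β * b ^ 2 := by
  nlinarith [sq_nonneg (2 * α * a - c * b), mul_nonneg (sub_nonneg.2 h) (sq_nonneg b)]

section Young

variable {X Z : Type*} [NormedAddCommGroup X] [InnerProductSpace ℝ X]
  [NormedAddCommGroup Z] [InnerProductSpace ℝ Z]

theorem inv_mul_inner_le_of_step {L : X →L[ℝ] Z} {p σ τ γ : ℝ} (hp : 0 < p) (hσ : 0 < σ)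
    (hτ : 0 < τ) (hγ : 0 < γ) (hstep : p⁻¹ * τ * σ * ‖L‖ ^ 2 ≤ γ ^ 2) (u : X) (w : Z) :
    p⁻¹ * ⟪L u, w⟫ ≤ γ * ((1 / 2) * τ⁻¹ * ‖u‖ ^ 2 + (2 * σ * p)⁻¹ * ‖w‖ ^ 2) := by
  have hCS : ⟪L u, w⟫ ≤ ‖L‖ * ‖u‖ * ‖w‖ :=
    (real_inner_le_norm _ _).trans (by gcongr; exact L.le_opNorm u)
  have hcoef : (p⁻¹ * ‖L‖) ^ 2 ≤ 4 * (γ / (2 * τ)) * (γ / (2 * σ * p)) := by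
    calc (p⁻¹ * ‖L‖) ^ 2 = (p⁻¹ * τ * σ * ‖L‖ ^ 2) * (τ * σ * p)⁻¹ := by field_simp
      _ ≤ γ ^ 2 * (τ * σ * p)⁻¹ := by gcongr
      _ = 4 * (γ / (2 * τ)) * (γ / (2 * σ * p)) := by field_simp; ring
  calc p⁻¹ * ⟪L u, w⟫ ≤ p⁻¹ * ‖L‖ * ‖u‖ * ‖w‖ := by
        rw [mul_assoc, mul_assoc, ← mul_assoc ‖L‖]; gcongr
    _ ≤ γ / (2 * τ) * ‖u‖ ^ 2 + γ / (2 * σ * p) * ‖w‖ ^ 2 :=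
        mul_mul_le_add_of_sq_le (by positivity) hcoef
    _ = _ := by field_simp

end Young

section Lyapunov

variable {X : Type*} [NormedAddCommGroup X] [InnerProductSpace ℝ X]
  {n : ℕ} {Y : Fin n → Type*} [∀ i, NormedAddCommGroup (Y i)] [∀ i, InnerProductSpace ℝ (Y i)]
  {A : ∀ i, X →L[ℝ] Y i} {p σ : Fin n → ℝ} {τ γ : ℝ}

theorem sum_inv_mul_inner_le_of_step (hp : ∀ i, 0 < p i) (hσ : ∀ i, 0 < σ i) (hτ : 0 < τ)
    (hγ : 0 < γ) (hstep : ∀ i, (p i)⁻¹ * τ * σ i * ‖A i‖ ^ 2 ≤ γ ^ 2) (u : X)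
    {w : ∀ j, Y j} {js : Fin n} (hw : ∀ j, j ≠ js → w j = 0) :
    ∑ j, (p j)⁻¹ * ⟪A j u, w j⟫
      ≤ γ * ((1 / 2) * τ⁻¹ * ‖u‖ ^ 2 + ∑ j, (2 * σ j * p j)⁻¹ * ‖w j‖ ^ 2) := by
  rw [sum_eq_single js (fun j _ hj => by rw [hw j hj, inner_zero_right, mul_zero])
    (fun h => absurd (mem_univ js) h)]
  refine (inv_mul_inner_le_of_step (hp js) (hσ js) hτ hγ (hstep js) u (w js)).trans ?_
  gcongr
  exact single_le_sum (f := fun j => (2 * σ j * p j)⁻¹ * ‖w j‖ ^ 2)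
    (fun j _ => by have := hσ j; have := hp j; positivity) (mem_univ js)

variable (A p σ τ γ) in
/-- The function `V` of the header, with `x = x^k`, `y = y^{k+1}`, `w = y^{k+1} − y^k`. -/
def lyapunov (xstar : X) (ystar : ∀ j, Y j) (x : X) (y w : ∀ j, Y j) : ℝ :=
  (1 / 2) * τ⁻¹ * ‖x - xstar‖ ^ 2 - ∑ j, (p j)⁻¹ * ⟪A j (x - xstar), w j⟫
    + γ * ∑ j, (2 * σ j * p j)⁻¹ * ‖w j‖ ^ 2 + ∑ j, (2 * σ j * p j)⁻¹ * ‖y j - ystar j‖ ^ 2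

theorem lyapunov_nonneg (hp : ∀ i, 0 < p i) (hσ : ∀ i, 0 < σ i) (hτ : 0 < τ) (hγ0 : 0 < γ)
    (hγ1 : γ ≤ 1) (hstep : ∀ i, (p i)⁻¹ * τ * σ i * ‖A i‖ ^ 2 ≤ γ ^ 2) (xstar : X)
    (ystar : ∀ j, Y j) (x : X) (y : ∀ j, Y j) {w : ∀ j, Y j} {js : Fin n}
    (hw : ∀ j, j ≠ js → w j = 0) : 0 ≤ lyapunov A p σ τ γ xstar ystar x y w := by
  have hyoung := sum_inv_mul_inner_le_of_step hp hσ hτ hγ0 hstep (x - xstar) hw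
  have hx : 0 ≤ (1 / 2) * τ⁻¹ * ‖x - xstar‖ ^ 2 := by positivity
  have hy : 0 ≤ ∑ j, (2 * σ j * p j)⁻¹ * ‖y j - ystar j‖ ^ 2 :=
    sum_nonneg fun j _ => by have := hσ j; have := hp j; positivity
  unfold lyapunov
  nlinarith

theorem lyapunov_zero (xstar : X) (ystar : ∀ j, Y j) (x : X) (y : ∀ j, Y j) :
    lyapunov A p σ τ γ xstar ystar x y 0 = (1 / 2) * (τ⁻¹ * ‖x - xstar‖ ^ 2)
      + (1 / 2) * ∑ j, (σ j * p j)⁻¹ * ‖y j - ystar j‖ ^ 2 := by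
  simp only [lyapunov, Pi.zero_apply, inner_zero_right, norm_zero, mul_zero, sum_const_zero,
    sub_zero, ne_eq, OfNat.ofNat_ne_zero, not_false_eq_true, zero_pow, add_zero, mul_sum]
  exact congrArg₂ (· + ·) (by ring) (sum_congr rfl fun j _ => by ring)

end Lyapunov

theorem sum_smul_update_apply {ι M : Type*} [Fintype ι] [DecidableEq ι] {Y : ι → Type*}
    [AddCommGroup M] [Module ℝ M] {p : ι → ℝ} (hp : ∑ i, p i = 1) (y yh : ∀ j, Y j) (j : ι)
    (φ : Y j → M) :
    ∑ i, p i • φ (Function.update y i (yh i) j) = φ (y j) + p j • (φ (yh j) - φ (y j)) := by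
  have hterm : ∀ i, p i • φ (Function.update y i (yh i) j)
      = p i • φ (y j) + if i = j then p j • (φ (yh j) - φ (y j)) else 0 := by
    intro i
    rcases eq_or_ne i j with rfl | hij
    · simp [smul_sub]
    · simp [Function.update_of_ne hij.symm, hij]
  rw [sum_congr rfl fun i _ => hterm i, sum_add_distrib, ← sum_smul, hp, one_smul,
    sum_ite_eq' univ j, if_pos (mem_univ j)]

section Correction

variable {n : ℕ} {Y : Fin n → Type*} [∀ i, NormedAddCommGroup (Y i)]
  [∀ i, InnerProductSpace ℝ (Y i)]

def dualCorrection (p : Fin n → ℝ) (y yh y' : ∀ j, Y j) : ∀ j, Y j :=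
  fun j => y j - yh j - (p j)⁻¹ • (y j - y' j)

def correctionEnergy (p σ : Fin n → ℝ) (v : ∀ j, Y j) : ℝ :=
  (1 / 2) * ∑ j, (p j / σ j) * ‖v j‖ ^ 2

theorem sum_smul_dualCorrection_update {p : Fin n → ℝ} (hp : ∀ i, p i ≠ 0)
    (hpsum : ∑ i, p i = 1) (y yh : ∀ j, Y j) (j : Fin n) :
    ∑ i, p i • dualCorrection p y yh (Function.update y i (yh i)) j = 0 := by
  simp only [dualCorrection]
  rw [sum_smul_update_apply hpsum y yh j (fun z => y j - yh j - (p j)⁻¹ • (y j - z)),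
    sub_self, smul_zero, sub_zero, sub_sub_cancel_left, smul_neg, smul_smul,
    mul_inv_cancel₀ (hp j), one_smul, add_neg_cancel]

end Correction

section CoordinateStep

variable {Z : Type*} [NormedAddCommGroup Z] [InnerProductSpace ℝ Z]

theorem coordinate_step_le {p σ γ : ℝ} (hp : 0 < p) (hσ : 0 < σ) (hγ1 : γ ≤ 1)
    {r y yh ys : Z}
    (hdual : (‖y - yh‖ ^ 2 + ‖yh - ys‖ ^ 2 - ‖y - ys‖ ^ 2) / (2 * σ) ≤ ⟪r, yh - ys⟫)
    (G : Z → ℝ) (hG : ∀ z, G z = -(p⁻¹ * ⟪r, z - y⟫) + γ * ((2 * σ * p)⁻¹ * ‖z - y‖ ^ 2)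
      + (2 * σ * p)⁻¹ * ‖z - ys‖ ^ 2
      + (1 - γ) * ((1 / 2) * (p / σ * ‖y - yh - p⁻¹ • (y - z)‖ ^ 2))) :
    G y + p * (G yh - G y) ≤ ⟪r, y - ys⟫ + (2 * σ * p)⁻¹ * ‖y - ys‖ ^ 2 := by
  have hsplit : ⟪r, yh - ys⟫ = ⟪r, yh - y⟫ + ⟪r, y - ys⟫ := by
    rw [← inner_add_right, sub_add_sub_cancel]
  have hcorr : ‖y - yh - p⁻¹ • (y - yh)‖ ^ 2 = (1 - p⁻¹) ^ 2 * ‖y - yh‖ ^ 2 := by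
    rw [show y - yh - p⁻¹ • (y - yh) = (1 - p⁻¹) • (y - yh) by module, norm_smul, mul_pow,
      Real.norm_eq_abs, sq_abs]
  have hcoef : (γ + (1 - γ) * (1 - p)) * ‖y - yh‖ ^ 2 / (2 * σ) ≤ ‖y - yh‖ ^ 2 / (2 * σ) := by
    gcongr
    exact mul_le_of_le_one_left (sq_nonneg _) (by nlinarith)
  have hexpand : G y + p * (G yh - G y) = -⟪r, yh - y⟫
      + (γ + (1 - γ) * (1 - p)) * ‖y - yh‖ ^ 2 / (2 * σ)
      + (‖yh - ys‖ ^ 2 - ‖y - ys‖ ^ 2) / (2 * σ) + (2 * σ * p)⁻¹ * ‖y - ys‖ ^ 2 := by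
    simp only [hG, hcorr, sub_self, smul_zero, sub_zero, inner_zero_right, norm_zero,
      norm_sub_rev yh y]
    field_simp
    ring
  rw [hsplit, add_sub_assoc, add_div] at hdual
  rw [hexpand]
  linarith

end CoordinateStep

section Descent

variable {X : Type*} [NormedAddCommGroup X] [InnerProductSpace ℝ X] [CompleteSpace X]
  {n : ℕ} {Y : Fin n → Type*} [∀ i, NormedAddCommGroup (Y i)] [∀ i, InnerProductSpace ℝ (Y i)]
  [∀ i, CompleteSpace (Y i)]
  {g : X → ℝ} {fstar : ∀ i, Y i → ℝ} {A : ∀ i, X →L[ℝ] Y i} {p σ : Fin n → ℝ} {τ γ : ℝ}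
  {xstar : X} {ystar : ∀ j, Y j}

theorem inner_AT_left (A : ∀ i, X →L[ℝ] Y i) (z : ∀ i, Y i) (q : X) :
    ⟪AT A z, q⟫ = ∑ j, ⟪A j q, z j⟫ := by
  simp only [AT, sum_inner, ContinuousLinearMap.adjoint_inner_left, real_inner_comm]

theorem primal_step_le (hg : ConvexOn ℝ Set.univ g) (hp : ∀ i, 0 < p i) (hσ : ∀ i, 0 < σ i)
    (hτ : 0 < τ) (hγ0 : 0 < γ) (hγ1 : γ ≤ 1)
    (hstep : ∀ i, (p i)⁻¹ * τ * σ i * ‖A i‖ ^ 2 ≤ γ ^ 2)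
    (hsolx : -(AT A ystar) ∈ subdiffAt g xstar) {xb x : X} {y w : ∀ j, Y j} {js : Fin n}
    (hw : ∀ j, j ≠ js → w j = 0)
    (hxp : IsProx τ g (xb - τ • AT A (fun j => y j + (p j)⁻¹ • w j)) x) :
    (1 / 2) * τ⁻¹ * ‖x - xstar‖ ^ 2 + ∑ j, ⟪A j (x - xstar), y j - ystar j⟫
      ≤ (1 / 2) * τ⁻¹ * ‖xb - xstar‖ ^ 2 - ∑ j, (p j)⁻¹ * ⟪A j (xb - xstar), w j⟫
        + γ * ∑ j, (2 * σ j * p j)⁻¹ * ‖w j‖ ^ 2 := by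
  rw [sub_eq_add_neg, ← smul_neg] at hxp
  have hthree := hxp.three_point hg hτ hsolx
  rw [neg_sub_neg, inner_sub_left, inner_AT_left, inner_AT_left] at hthree
  simp only [inner_add_right, real_inner_smul_right, sum_add_distrib] at hthree
  have hyoung := sum_inv_mul_inner_le_of_step hp hσ hτ hγ0 hstep (xb - x) hw
  have hsplit : ∑ j, (p j)⁻¹ * ⟪A j (xb - xstar), w j⟫
      = ∑ j, (p j)⁻¹ * ⟪A j (xb - x), w j⟫ + ∑ j, (p j)⁻¹ * ⟪A j (x - xstar), w j⟫ := by
    rw [← sum_add_distrib]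
    refine sum_congr rfl fun j _ => ?_
    rw [← mul_add, ← inner_add_left, ← map_add, sub_add_sub_cancel]
  have hγx : γ * ((1 / 2) * τ⁻¹ * ‖xb - x‖ ^ 2) ≤ (1 / 2) * τ⁻¹ * ‖xb - x‖ ^ 2 :=
    mul_le_of_le_one_left (by positivity) hγ1
  have hdiv : (‖xb - x‖ ^ 2 + ‖x - xstar‖ ^ 2 - ‖xb - xstar‖ ^ 2) / (2 * τ)
      = (1 / 2) * τ⁻¹ * ‖xb - x‖ ^ 2 + (1 / 2) * τ⁻¹ * ‖x - xstar‖ ^ 2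
        - (1 / 2) * τ⁻¹ * ‖xb - xstar‖ ^ 2 := by ring
  rw [hdiv] at hthree
  simp only [sum_sub_distrib, inner_sub_right] at hthree ⊢
  rw [hsplit]
  linarith

theorem expected_lyapunov_step_le (hg : ConvexOn ℝ Set.univ g)
    (hfs : ∀ i, ConvexOn ℝ Set.univ (fstar i)) (hp : ∀ i, 0 < p i) (hpsum : ∑ i, p i = 1)
    (hσ : ∀ i, 0 < σ i) (hτ : 0 < τ) (hγ0 : 0 < γ) (hγ1 : γ ≤ 1)
    (hstep : ∀ i, (p i)⁻¹ * τ * σ i * ‖A i‖ ^ 2 ≤ γ ^ 2)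
    (hsolx : -(AT A ystar) ∈ subdiffAt g xstar)
    (hsoly : ∀ j, A j xstar ∈ subdiffAt (fstar j) (ystar j))
    {xb x : X} {yp y yh : ∀ j, Y j} {js : Fin n} (hsupp : ∀ j, j ≠ js → (y - yp) j = 0)
    (hxp : IsProx τ g (xb - τ • AT A (fun j => y j + (p j)⁻¹ • (y - yp) j)) x)
    (hyp : ∀ j, IsProx (σ j) (fstar j) (y j + σ j • A j x) (yh j)) :
    ∑ i, p i * (lyapunov A p σ τ γ xstar ystar x (Function.update y i (yh i))
          (Function.update y i (yh i) - y)
        + (1 - γ) * correctionEnergy p σ (dualCorrection p y yh (Function.update y i (yh i))))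
      ≤ lyapunov A p σ τ γ xstar ystar xb y (y - yp) := by
  -- `G j z` is the `j`-th summand of the averaged quantity when the new `j`-th dual block is `z`.
  set G : ∀ j, Y j → ℝ := fun j z => -((p j)⁻¹ * ⟪A j (x - xstar), z - y j⟫)
    + γ * ((2 * σ j * p j)⁻¹ * ‖z - y j‖ ^ 2) + (2 * σ j * p j)⁻¹ * ‖z - ystar j‖ ^ 2
    + (1 - γ) * ((1 / 2) * (p j / σ j * ‖y j - yh j - (p j)⁻¹ • (y j - z)‖ ^ 2)) with hG
  have hsummand : ∀ i, lyapunov A p σ τ γ xstar ystar x (Function.update y i (yh i))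
        (Function.update y i (yh i) - y)
      + (1 - γ) * correctionEnergy p σ (dualCorrection p y yh (Function.update y i (yh i)))
      = (1 / 2) * τ⁻¹ * ‖x - xstar‖ ^ 2 + ∑ j, G j (Function.update y i (yh i) j) := by
    intro i
    simp only [hG, lyapunov, correctionEnergy, dualCorrection, Pi.sub_apply, sum_add_distrib,
      sum_neg_distrib, mul_sum]
    ring
  have hdual : ∀ j, (‖y j - yh j‖ ^ 2 + ‖yh j - ystar j‖ ^ 2 - ‖y j - ystar j‖ ^ 2) / (2 * σ j)
      ≤ ⟪A j (x - xstar), yh j - ystar j⟫ := fun j => by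
    simpa only [map_sub] using (hyp j).three_point (hfs j) (hσ j) (hsoly j)
  have hprimal := primal_step_le hg hp hσ hτ hγ0 hγ1 hstep hsolx hsupp hxp
  calc _ = (1 / 2) * τ⁻¹ * ‖x - xstar‖ ^ 2
        + ∑ j, ∑ i, p i • G j (Function.update y i (yh i) j) := by
        simp only [hsummand, mul_add, sum_add_distrib, ← sum_mul, hpsum, one_mul, mul_sum,
          smul_eq_mul]
        rw [sum_comm]
    _ = (1 / 2) * τ⁻¹ * ‖x - xstar‖ ^ 2
        + ∑ j, (G j (y j) + p j * (G j (yh j) - G j (y j))) := by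
        congr 1
        exact sum_congr rfl fun j _ => sum_smul_update_apply hpsum y yh j (G j)
    _ ≤ (1 / 2) * τ⁻¹ * ‖x - xstar‖ ^ 2
        + ∑ j, (⟪A j (x - xstar), y j - ystar j⟫ + (2 * σ j * p j)⁻¹ * ‖y j - ystar j‖ ^ 2) := by
        exact add_le_add le_rfl (sum_le_sum fun j _ =>
          coordinate_step_le (hp j) (hσ j) hγ1 (hdual j) (G j) fun _ => rfl)
    _ ≤ lyapunov A p σ τ γ xstar ystar xb y (y - yp) := by
        rw [lyapunov, sum_add_distrib]
        linarith

end Descent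

section Expectation

variable {n : ℕ} (i0 : Fin n) (p : Fin n → ℝ)

theorem Exp_zero (f : (ℕ → Fin n) → ℝ) : Exp i0 p 0 f = f fun _ => i0 := by
  simp [Exp]

theorem Exp_succ (K : ℕ) (f : (ℕ → Fin n) → ℝ) :
    Exp i0 p (K + 1) f = Exp i0 p K fun ω => ∑ i, p i * f (Function.update ω K i) := by
  simp only [Exp, mul_sum]
  rw [sum_comm, ← Fintype.sum_prod_type', ← (Fin.snocEquiv fun _ => Fin n).sum_comp]
  refine Fintype.sum_congr _ _ fun ⟨i, t⟩ => ?_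
  have hsnoc : (fun m => if h : m < K + 1 then (Fin.snoc t i : Fin (K + 1) → Fin n) ⟨m, h⟩ else i0)
      = Function.update (fun m => if h : m < K then t ⟨m, h⟩ else i0) K i := by
    funext m
    rcases lt_trichotomy m K with hm | rfl | hm
    · rw [dif_pos (by omega), Function.update_of_ne hm.ne, dif_pos hm]
      exact Fin.snoc_castSucc (α := fun _ => Fin n) (i := ⟨m, hm⟩) ..
    · rw [dif_pos (by omega), Function.update_self]
      exact Fin.snoc_last (α := fun _ => Fin n) ..
    · rw [dif_neg (by omega), Function.update_of_ne hm.ne', dif_neg (by omega)]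
  simp only [Fin.snocEquiv_apply, Fin.prod_univ_castSucc, Fin.snoc_castSucc, Fin.snoc_last]
  rw [hsnoc]
  ring

theorem Exp_mono (hp : ∀ i, 0 ≤ p i) (K : ℕ) {f g : (ℕ → Fin n) → ℝ} (h : ∀ ω, f ω ≤ g ω) :
    Exp i0 p K f ≤ Exp i0 p K g :=
  sum_le_sum fun _ _ => mul_le_mul_of_nonneg_left (h _) (prod_nonneg fun _ _ => hp _)

theorem Exp_const_mul (K : ℕ) (c : ℝ) (f : (ℕ → Fin n) → ℝ) :
    Exp i0 p K (fun ω => c * f ω) = c * Exp i0 p K f := by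
  simp only [Exp, mul_sum]
  exact sum_congr rfl fun _ _ => mul_left_comm _ _ _

end Expectation

section Run

variable {X : Type*} [NormedAddCommGroup X] [InnerProductSpace ℝ X] [CompleteSpace X]
  {n : ℕ} {Y : Fin n → Type*} [∀ i, NormedAddCommGroup (Y i)] [∀ i, InnerProductSpace ℝ (Y i)]
  [∀ i, CompleteSpace (Y i)]

/-- The SPDHG recursion for every index sequence `ω` (`i_k = ω (k − 1)`), written with
`m = k − 1`: `xs k = x^k`, `ys k = y^k`, `yhat (k + 1) = ŷ^{k+1}`. -/
structure IsSPDHGRun (g : X → ℝ) (fstar : ∀ i, Y i → ℝ) (A : ∀ i, X →L[ℝ] Y i)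
    (p σ : Fin n → ℝ) (τ : ℝ) (x0 : X) (y1 : ∀ j, Y j) (xs : ℕ → (ℕ → Fin n) → X)
    (ys yhat : ℕ → (ℕ → Fin n) → ∀ j, Y j) : Prop where
  xs_zero : ∀ ω, xs 0 ω = x0
  ys_zero : ∀ ω, ys 0 ω = y1
  ys_one : ∀ ω, ys 1 ω = y1
  xs_succ : ∀ m ω, IsProx τ g
    (xs m ω - τ • AT A (fun j => ys (m + 1) ω j + (p j)⁻¹ • (ys (m + 1) ω - ys m ω) j))
    (xs (m + 1) ω)
  yhat_succ : ∀ m ω j, IsProx (σ j) (fstar j) (ys (m + 1) ω j + σ j • A j (xs (m + 1) ω))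
    (yhat (m + 2) ω j)
  ys_succ : ∀ m ω, ys (m + 2) ω = Function.update (ys (m + 1) ω) (ω m) (yhat (m + 2) ω (ω m))

variable (A : ∀ i, X →L[ℝ] Y i) (p σ : Fin n → ℝ) (τ γ : ℝ) (xstar : X) (ystar : ∀ j, Y j)
  (xs : ℕ → (ℕ → Fin n) → X) (ys yhat : ℕ → (ℕ → Fin n) → ∀ j, Y j) in
/-- The sum is `∑_{k=1}^{m} ½‖v^{k+1}‖²_{D(σ)⁻¹P}`. -/
def runEnergy (m : ℕ) (ω : ℕ → Fin n) : ℝ :=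
  lyapunov A p σ τ γ xstar ystar (xs m ω) (ys (m + 1) ω) (ys (m + 1) ω - ys m ω)
    + (1 - γ) * ∑ k ∈ range m,
      correctionEnergy p σ (dualCorrection p (ys (k + 1) ω) (yhat (k + 2) ω) (ys (k + 2) ω))

namespace IsSPDHGRun

variable {g : X → ℝ} {fstar : ∀ i, Y i → ℝ} {A : ∀ i, X →L[ℝ] Y i} {p σ : Fin n → ℝ} {τ γ : ℝ}
  {xstar : X} {ystar : ∀ j, Y j} {x0 : X} {y1 : ∀ j, Y j} {xs : ℕ → (ℕ → Fin n) → X}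
  {ys yhat : ℕ → (ℕ → Fin n) → ∀ j, Y j}

theorem exists_ys_succ_sub_eq_zero (run : IsSPDHGRun g fstar A p σ τ x0 y1 xs ys yhat)
    (m : ℕ) (ω : ℕ → Fin n) :
    ∃ js, ∀ j, j ≠ js → (ys (m + 1) ω - ys m ω) j = 0 := by
  cases m with
  | zero => exact ⟨ω 0, fun j _ => by rw [Pi.sub_apply, run.ys_one, run.ys_zero, sub_self]⟩
  | succ m => exact ⟨ω m, fun j hj => by
      rw [Pi.sub_apply, run.ys_succ, Function.update_of_ne hj, sub_self]⟩

theorem xs_succ_eq (run : IsSPDHGRun g fstar A p σ τ x0 y1 xs ys yhat)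
    (hg : ConvexOn ℝ Set.univ g) (hτ : 0 < τ)
    {m : ℕ} {ω ω' : ℕ → Fin n} (hx : xs m ω = xs m ω') (hy : ys m ω = ys m ω')
    (hy' : ys (m + 1) ω = ys (m + 1) ω') : xs (m + 1) ω = xs (m + 1) ω' :=
  (run.xs_succ m ω).eq (by rw [hx, hy, hy']; exact run.xs_succ m ω') hg hτ

theorem yhat_succ_eq (run : IsSPDHGRun g fstar A p σ τ x0 y1 xs ys yhat)
    (hfs : ∀ i, ConvexOn ℝ Set.univ (fstar i))
    (hσ : ∀ i, 0 < σ i) {m : ℕ} {ω ω' : ℕ → Fin n} (hx : xs (m + 1) ω = xs (m + 1) ω')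
    (hy : ys (m + 1) ω = ys (m + 1) ω') : yhat (m + 2) ω = yhat (m + 2) ω' :=
  funext fun j => (run.yhat_succ m ω j).eq (by rw [hx, hy]; exact run.yhat_succ m ω' j)
    (hfs j) (hσ j)

theorem eq_of_eqOn_Iio (run : IsSPDHGRun g fstar A p σ τ x0 y1 xs ys yhat)
    (hg : ConvexOn ℝ Set.univ g)
    (hfs : ∀ i, ConvexOn ℝ Set.univ (fstar i)) (hτ : 0 < τ) (hσ : ∀ i, 0 < σ i) :
    ∀ m {ω ω' : ℕ → Fin n}, (∀ l < m, ω l = ω' l) →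
      ys m ω = ys m ω' ∧ xs m ω = xs m ω' ∧ ys (m + 1) ω = ys (m + 1) ω'
  | 0, ω, ω', _ => ⟨by rw [run.ys_zero, run.ys_zero], by rw [run.xs_zero, run.xs_zero],
      by rw [run.ys_one, run.ys_one]⟩
  | m + 1, ω, ω', h => by
    obtain ⟨hy, hx, hy'⟩ := run.eq_of_eqOn_Iio hg hfs hτ hσ m fun l hl => h l (by omega)
    have hx' := run.xs_succ_eq hg hτ hx hy hy'
    refine ⟨hy', hx', ?_⟩
    rw [run.ys_succ, run.ys_succ, hy', run.yhat_succ_eq hfs hσ hx' hy', h m m.lt_add_one]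

theorem apply_update (run : IsSPDHGRun g fstar A p σ τ x0 y1 xs ys yhat)
    (hg : ConvexOn ℝ Set.univ g)
    (hfs : ∀ i, ConvexOn ℝ Set.univ (fstar i)) (hτ : 0 < τ) (hσ : ∀ i, 0 < σ i)
    (m : ℕ) (ω : ℕ → Fin n) (i : Fin n) :
    ys (m + 1) (Function.update ω m i) = ys (m + 1) ω
      ∧ xs (m + 1) (Function.update ω m i) = xs (m + 1) ω
      ∧ yhat (m + 2) (Function.update ω m i) = yhat (m + 2) ω
      ∧ ys (m + 2) (Function.update ω m i)
        = Function.update (ys (m + 1) ω) i (yhat (m + 2) ω i) := by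
  obtain ⟨hy, hx, hy'⟩ := run.eq_of_eqOn_Iio hg hfs hτ hσ m
    fun l hl => Function.update_of_ne hl.ne i ω
  have hx' := run.xs_succ_eq hg hτ hx hy hy'
  have hyh := run.yhat_succ_eq hfs hσ hx' hy'
  refine ⟨hy', hx', hyh, ?_⟩
  rw [run.ys_succ, hy', hyh, Function.update_self]

theorem sum_runEnergy_update_le (run : IsSPDHGRun g fstar A p σ τ x0 y1 xs ys yhat)
    (hg : ConvexOn ℝ Set.univ g)
    (hfs : ∀ i, ConvexOn ℝ Set.univ (fstar i)) (hp : ∀ i, 0 < p i) (hpsum : ∑ i, p i = 1)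
    (hσ : ∀ i, 0 < σ i) (hτ : 0 < τ) (hγ0 : 0 < γ) (hγ1 : γ ≤ 1)
    (hstep : ∀ i, (p i)⁻¹ * τ * σ i * ‖A i‖ ^ 2 ≤ γ ^ 2)
    (hsolx : -(AT A ystar) ∈ subdiffAt g xstar)
    (hsoly : ∀ j, A j xstar ∈ subdiffAt (fstar j) (ystar j))
    (m : ℕ) (ω : ℕ → Fin n) :
    ∑ i, p i * runEnergy A p σ τ γ xstar ystar xs ys yhat (m + 1) (Function.update ω m i)
      ≤ runEnergy A p σ τ γ xstar ystar xs ys yhat m ω := by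
  set S := ∑ k ∈ range m,
    correctionEnergy p σ (dualCorrection p (ys (k + 1) ω) (yhat (k + 2) ω) (ys (k + 2) ω))
  have hpast : ∀ i, ∑ k ∈ range m, correctionEnergy p σ (dualCorrection p
      (ys (k + 1) (Function.update ω m i)) (yhat (k + 2) (Function.update ω m i))
      (ys (k + 2) (Function.update ω m i))) = S := fun i => sum_congr rfl fun k hk => by
    obtain ⟨hy, hx, hy'⟩ := run.eq_of_eqOn_Iio hg hfs hτ hσ (k + 1)
      (ω := Function.update ω m i) (ω' := ω) fun l hl =>
      Function.update_of_ne (show l ≠ m by rw [mem_range] at hk; omega) _ _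
    rw [hy, hy', run.yhat_succ_eq hfs hσ hx hy]
  have hsummand : ∀ i, runEnergy A p σ τ γ xstar ystar xs ys yhat (m + 1) (Function.update ω m i)
      = lyapunov A p σ τ γ xstar ystar (xs (m + 1) ω)
          (Function.update (ys (m + 1) ω) i (yhat (m + 2) ω i))
          (Function.update (ys (m + 1) ω) i (yhat (m + 2) ω i) - ys (m + 1) ω)
        + (1 - γ) * correctionEnergy p σ (dualCorrection p (ys (m + 1) ω) (yhat (m + 2) ω)
          (Function.update (ys (m + 1) ω) i (yhat (m + 2) ω i)))
        + (1 - γ) * S := fun i => by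
    obtain ⟨hy, hx, hyh, hy'⟩ := run.apply_update hg hfs hτ hσ m ω i
    rw [runEnergy, sum_range_succ, hpast i, hy, hx, hyh, hy']
    ring
  obtain ⟨js, hjs⟩ := run.exists_ys_succ_sub_eq_zero m ω
  calc _ = ∑ i, p i * (lyapunov A p σ τ γ xstar ystar (xs (m + 1) ω)
          (Function.update (ys (m + 1) ω) i (yhat (m + 2) ω i))
          (Function.update (ys (m + 1) ω) i (yhat (m + 2) ω i) - ys (m + 1) ω)
        + (1 - γ) * correctionEnergy p σ (dualCorrection p (ys (m + 1) ω) (yhat (m + 2) ω)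
          (Function.update (ys (m + 1) ω) i (yhat (m + 2) ω i)))) + (1 - γ) * S := by
        simp only [hsummand, mul_add, sum_add_distrib, ← sum_mul, hpsum, one_mul]
    _ ≤ runEnergy A p σ τ γ xstar ystar xs ys yhat m ω :=
        add_le_add (expected_lyapunov_step_le hg hfs hp hpsum hσ hτ hγ0 hγ1 hstep hsolx
          hsoly hjs (run.xs_succ m ω) (run.yhat_succ m ω)) le_rfl

theorem Exp_runEnergy_le (run : IsSPDHGRun g fstar A p σ τ x0 y1 xs ys yhat)
    (hg : ConvexOn ℝ Set.univ g)
    (hfs : ∀ i, ConvexOn ℝ Set.univ (fstar i)) (hp : ∀ i, 0 < p i) (hpsum : ∑ i, p i = 1)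
    (hσ : ∀ i, 0 < σ i) (hτ : 0 < τ) (hγ0 : 0 < γ) (hγ1 : γ ≤ 1)
    (hstep : ∀ i, (p i)⁻¹ * τ * σ i * ‖A i‖ ^ 2 ≤ γ ^ 2)
    (hsolx : -(AT A ystar) ∈ subdiffAt g xstar)
    (hsoly : ∀ j, A j xstar ∈ subdiffAt (fstar j) (ystar j))
    (i0 : Fin n) : ∀ m, Exp i0 p m (runEnergy A p σ τ γ xstar ystar xs ys yhat m)
      ≤ lyapunov A p σ τ γ xstar ystar x0 y1 0
  | 0 => by
    rw [Exp_zero, runEnergy, run.xs_zero, run.ys_one, run.ys_zero, sub_self, sum_range_zero,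
      mul_zero, add_zero]
  | m + 1 => by
    rw [Exp_succ]
    exact (Exp_mono i0 p (fun i => (hp i).le) m fun ω => run.sum_runEnergy_update_le hg hfs hp
      hpsum hσ hτ hγ0 hγ1 hstep hsolx hsoly m ω).trans
      (run.Exp_runEnergy_le hg hfs hp hpsum hσ hτ hγ0 hγ1 hstep hsolx hsoly i0 m)

theorem sum_smul_dualCorrection_eq_zero (run : IsSPDHGRun g fstar A p σ τ x0 y1 xs ys yhat)
    (hg : ConvexOn ℝ Set.univ g) (hfs : ∀ i, ConvexOn ℝ Set.univ (fstar i)) (hp : ∀ i, 0 < p i)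
    (hpsum : ∑ i, p i = 1) (hσ : ∀ i, 0 < σ i) (hτ : 0 < τ) (m : ℕ) (ω : ℕ → Fin n)
    (j : Fin n) :
    ∑ i, p i • dualCorrection p (ys (m + 1) (Function.update ω m i))
      (yhat (m + 2) (Function.update ω m i)) (ys (m + 2) (Function.update ω m i)) j = 0 := by
  rw [← sum_smul_dualCorrection_update (fun i => (hp i).ne') hpsum (ys (m + 1) ω)
    (yhat (m + 2) ω) j]
  refine sum_congr rfl fun i _ => ?_
  obtain ⟨hy, -, hyh, hy'⟩ := run.apply_update hg hfs hτ hσ m ω i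
  rw [hy, hyh, hy']

theorem mul_Exp_sum_correctionEnergy_le (run : IsSPDHGRun g fstar A p σ τ x0 y1 xs ys yhat)
    (hg : ConvexOn ℝ Set.univ g)
    (hfs : ∀ i, ConvexOn ℝ Set.univ (fstar i)) (hp : ∀ i, 0 < p i) (hpsum : ∑ i, p i = 1)
    (hσ : ∀ i, 0 < σ i) (hτ : 0 < τ) (hγ0 : 0 < γ) (hγ1 : γ ≤ 1)
    (hstep : ∀ i, (p i)⁻¹ * τ * σ i * ‖A i‖ ^ 2 ≤ γ ^ 2)
    (hsolx : -(AT A ystar) ∈ subdiffAt g xstar)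
    (hsoly : ∀ j, A j xstar ∈ subdiffAt (fstar j) (ystar j)) (i0 : Fin n) (K : ℕ) :
    (1 - γ) * Exp i0 p K (fun ω => ∑ k ∈ range K,
        correctionEnergy p σ (dualCorrection p (ys (k + 1) ω) (yhat (k + 2) ω) (ys (k + 2) ω)))
      ≤ lyapunov A p σ τ γ xstar ystar x0 y1 0 := by
  rw [← Exp_const_mul]
  refine (Exp_mono i0 p (fun i => (hp i).le) K fun ω => ?_).trans
    (run.Exp_runEnergy_le hg hfs hp hpsum hσ hτ hγ0 hγ1 hstep hsolx hsoly i0 K)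
  obtain ⟨js, hjs⟩ := run.exists_ys_succ_sub_eq_zero K ω
  rw [runEnergy]
  linarith [lyapunov_nonneg hp hσ hτ hγ0 hγ1 hstep xstar ystar (xs K ω) (ys (K + 1) ω) hjs]

end IsSPDHGRun

end Run

theorem sum_Icc_one_eq_sum_range {M : Type*} [AddCommMonoid M] (f : ℕ → M) (K : ℕ) :
    ∑ k ∈ Icc 1 K, f k = ∑ k ∈ range K, f (k + 1) := by
  rw [range_eq_Ico, sum_Ico_add' f 0 K 1, zero_add, Ico_add_one_right_eq_Icc]

/-- Lemma 4.8, (4.22): with `v^{k+1} = y^k − ŷ^{k+1} − P⁻¹(y^k − y^{k+1})` defined from the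
SPDHG iterates (indices `i_k = ω (k−1)`, `ℙ(i_k = i) = p i`), one has `E_k[v^{k+1}] = 0`
for every `k ≥ 1` (the `p`-average over the value of the index `i_k`, holding the past
fixed, vanishes), and for every `K ≥ 1` and any fixed primal-dual solution `(x^*, y^*)`,
`E[∑_{k=1}^K ½‖v^{k+1}‖²_{D(σ)⁻¹P}] ≤ Δ⁰ / C₁`, where `C₁ = 1 − γ` and
`Δ⁰ = V_1(x⁰ − x^*, y¹ − y^*) = ½‖x⁰ − x^*‖²_{τ⁻¹} + ½‖y¹ − y^*‖²_{D(σ)⁻¹P⁻¹}`. -/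
theorem spdhg_dual_correction_variance_bound
    {X : Type*} [NormedAddCommGroup X] [InnerProductSpace ℝ X] [FiniteDimensional ℝ X]
    {n : ℕ} {Y : Fin n → Type*} [∀ i, NormedAddCommGroup (Y i)]
    [∀ i, InnerProductSpace ℝ (Y i)] [∀ i, FiniteDimensional ℝ (Y i)]
    (g : X → ℝ) (fstar : ∀ i, Y i → ℝ)
    (hg : ConvexOn ℝ Set.univ g) (hfs : ∀ i, ConvexOn ℝ Set.univ (fstar i))
    (A : ∀ i, X →L[ℝ] Y i)
    (p σ : Fin n → ℝ) (τ γ : ℝ)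
    (hp : ∀ i, 0 < p i) (hpsum : ∑ i, p i = 1)
    (hτ : 0 < τ) (hσ : ∀ i, 0 < σ i) (hγ0 : 0 < γ) (hγ1 : γ < 1)
    (hstep : ∀ i, (p i)⁻¹ * τ * σ i * ‖A i‖ ^ 2 ≤ γ ^ 2)
    -- a fixed primal-dual solution
    (xstar : X) (ystar : ∀ j, Y j)
    (hsolx : -(AT A ystar) ∈ subdiffAt g xstar)
    (hsoly : ∀ j, A j xstar ∈ subdiffAt (fstar j) (ystar j))
    -- SPDHG iterates, parameterized by the index sequence ω (with i_k = ω (k−1))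
    (i0 : Fin n) (x0 : X) (y1 : ∀ j, Y j)
    (xs : ℕ → (ℕ → Fin n) → X) (ys yhat : ℕ → (ℕ → Fin n) → ∀ j, Y j)
    (hx0 : ∀ ω, xs 0 ω = x0) (hy0 : ∀ ω, ys 0 ω = y1) (hy1 : ∀ ω, ys 1 ω = y1)
    (hxs : ∀ k, 1 ≤ k → ∀ ω, IsProx τ g
      (xs (k - 1) ω - τ • AT A
        (fun j => ys k ω j + (p j)⁻¹ • (ys k ω j - ys (k - 1) ω j))) (xs k ω))
    (hyhat : ∀ k, 1 ≤ k → ∀ ω j,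
      IsProx (σ j) (fstar j) (ys k ω j + σ j • A j (xs k ω)) (yhat (k + 1) ω j))
    (hys : ∀ k, 1 ≤ k → ∀ ω,
      ys (k + 1) ω = Function.update (ys k ω) (ω (k - 1)) (yhat (k + 1) ω (ω (k - 1))))
    -- the correction sequence v^{k+1}
    (v : ℕ → (ℕ → Fin n) → ∀ j, Y j)
    (hv : ∀ k, 1 ≤ k → ∀ ω j,
      v (k + 1) ω j = ys k ω j - yhat (k + 1) ω j - (p j)⁻¹ • (ys k ω j - ys (k + 1) ω j))
    -- the constants
    (C1 Δ0 : ℝ) (hC1 : C1 = 1 - γ)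
    (hΔ0 : Δ0 = (1 / 2) * (τ⁻¹ * ‖x0 - xstar‖ ^ 2)
      + (1 / 2) * ∑ j, (σ j * p j)⁻¹ * ‖y1 j - ystar j‖ ^ 2) :
    -- E_k[v^{k+1}] = 0 for every k ≥ 1
    (∀ k, 1 ≤ k → ∀ ω (j : Fin n),
      ∑ i, p i • v (k + 1) (Function.update ω (k - 1) i) j = 0)
    ∧
    -- E[∑_{k=1}^K ½‖v^{k+1}‖²_{D(σ)⁻¹P}] ≤ Δ⁰/C₁
    (∀ K, 1 ≤ K →
      Exp i0 p K (fun ω =>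
        ∑ k ∈ Finset.Icc 1 K, (1 / 2) * ∑ j, (p j / σ j) * ‖v (k + 1) ω j‖ ^ 2)
      ≤ Δ0 / C1) := by
  have run : IsSPDHGRun g fstar A p σ τ x0 y1 xs ys yhat :=
    ⟨hx0, hy0, hy1, fun m ω => hxs (m + 1) m.succ_pos ω,
      fun m ω j => hyhat (m + 1) m.succ_pos ω j, fun m ω => hys (m + 1) m.succ_pos ω⟩
  have hv' : ∀ m ω, dualCorrection p (ys (m + 1) ω) (yhat (m + 2) ω) (ys (m + 2) ω)
      = v (m + 2) ω := fun m ω => funext fun j => (hv (m + 1) m.succ_pos ω j).symm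
  refine ⟨fun k hk ω j => ?_, fun K _ => ?_⟩
  · obtain ⟨m, rfl⟩ := Nat.exists_eq_add_of_le' hk
    have hmean := run.sum_smul_dualCorrection_eq_zero hg hfs hp hpsum hσ hτ m ω j
    simp only [hv'] at hmean
    exact hmean
  · have hexp := run.mul_Exp_sum_correctionEnergy_le hg hfs hp hpsum hσ hτ hγ0 hγ1.le hstep
      hsolx hsoly i0 K
    simp only [hv', correctionEnergy] at hexp
    rw [lyapunov_zero, ← hΔ0] at hexp
    rw [hC1, le_div_iff₀ (sub_pos.2 hγ1), mul_comm]
    simpa only [sum_Icc_one_eq_sum_range] using hexp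
end
end
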